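/- arXiv:1401.1263 — 3 statements merged into one kernel-verified Lean document; each statement's English description precedes it below -/
import Mathlib

section
/- If G is a connected graph of order N, then the normalized Laplacian Estrada index NEE(G) = Σ_{i=1}^N e^{λ_i - 1} satisfies NEE(G) ≥ (N-1) e^{1/(N-1)} + e^{-1}, with equality if and only if G is the complete graph K_N. -/
open Matrix BigOperators
open scoped Classical

noncomputable def normLap {V : Type*} [Fintype V] (G : SimpleGraph V) : Matrix V V ℝ :=
  letI : DecidableRel G.Adj := Classical.decRel _
  let Dh : Matrix V V ℝ := Matrix.diagonal (fun v => (Real.sqrt (G.degree v))⁻¹)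
  Dh * (Matrix.diagonal (fun v => ((G.degree v : ℝ))) - G.adjMatrix ℝ) * Dh

noncomputable def NEE {V : Type*} [Fintype V] [DecidableEq V] (G : SimpleGraph V)
    (hL : (normLap G).IsHermitian) : ℝ :=
  ∑ i, Real.exp (hL.eigenvalues i - 1)

/-!
For connected `G` on `N ≥ 2` vertices every degree is positive, so `tr L = N` and the vector
`(√d(v))_v` lies in the kernel of `L`: one eigenvalue is `0` and the other `N - 1` have mean
`c = N / (N - 1)`. Bounding `exp` below by its tangent line at `c - 1` gives
`NEE ≥ e⁻¹ + (N - 1) e^(c - 1)`, with equality iff those `N - 1` eigenvalues all equal `c`, i.e.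
iff `L * L = c • L`. For `K_N`, `L = c (I - J / N)` with `I - J / N` idempotent. If `G` is not
complete, a shortest path `x ~ y ~ z` between non-adjacent vertices gives
`(L * L)(x, z) ≥ L(x, y) L(y, z) > 0`, since all off-diagonal entries of `L` are `≤ 0`, while
`L(x, z) = 0`.
-/

open Real Finset

namespace Matrix.IsHermitian

variable {𝕜 : Type*} [RCLike 𝕜] {n : Type*} [Fintype n] [DecidableEq n] {A : Matrix n n 𝕜}

lemma mul_self_eq_smul_iff (hA : A.IsHermitian) (c : ℝ) :
    A * A = c • A ↔ ∀ i, hA.eigenvalues i * hA.eigenvalues i = c * hA.eigenvalues i := by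
  conv_lhs =>
    rw [RCLike.real_smul_eq_coe_smul (K := 𝕜), hA.spectral_theorem, ← map_mul, ← map_smul,
      EquivLike.apply_eq_iff_eq]
  simp [diagonal_mul_diagonal, ← diagonal_smul]

lemma exists_eigenvalues_eq_zero (hA : A.IsHermitian) {v : n → 𝕜} (hv : v ≠ 0)
    (hAv : A *ᵥ v = 0) : ∃ i, hA.eigenvalues i = 0 := by
  have hdet : A.det = 0 := exists_mulVec_eq_zero_iff.mp ⟨v, hv, hAv⟩
  simpa [hA.det_eq_prod_eigenvalues, Finset.prod_eq_zero_iff] using hdet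

end Matrix.IsHermitian

lemma exp_mul_sub_add_one_le_exp (x c : ℝ) : exp c * (x - c + 1) ≤ exp x := by
  have := add_one_le_exp (x - c)
  calc exp c * (x - c + 1) ≤ exp c * exp (x - c) := by gcongr
    _ = exp x := by rw [← exp_add]; ring_nf

lemma exp_mul_sub_add_one_lt_exp {x c : ℝ} (h : x ≠ c) : exp c * (x - c + 1) < exp x := by
  have := add_one_lt_exp (sub_ne_zero.mpr h)
  calc exp c * (x - c + 1) < exp c * exp (x - c) := by gcongr
    _ = exp x := by rw [← exp_add]; ring_nf

section

variable {ι : Type*} (s : Finset ι) {x : ι → ℝ} {c : ℝ}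

lemma sum_exp_mul_sub_add_one (hx : ∑ i ∈ s, x i = #s * c) :
    ∑ i ∈ s, exp c * (x i - c + 1) = #s * exp c := by
  rw [← mul_sum, sum_add_distrib, sum_sub_distrib, hx]
  simp only [sum_const, nsmul_eq_mul, sub_self, mul_one, zero_add]
  ring

lemma card_mul_exp_le_sum_exp (hx : ∑ i ∈ s, x i = #s * c) :
    #s * exp c ≤ ∑ i ∈ s, exp (x i) := by
  rw [← sum_exp_mul_sub_add_one s hx]
  exact sum_le_sum fun i _ ↦ exp_mul_sub_add_one_le_exp (x i) c

lemma sum_exp_eq_card_mul_exp_iff (hx : ∑ i ∈ s, x i = #s * c) :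
    ∑ i ∈ s, exp (x i) = #s * exp c ↔ ∀ i ∈ s, x i = c := by
  rw [← sum_exp_mul_sub_add_one s hx, eq_comm,
    sum_eq_sum_iff_of_le fun i _ ↦ exp_mul_sub_add_one_le_exp (x i) c]
  refine forall₂_congr fun i _ ↦ ⟨fun h ↦ ?_, fun h ↦ by rw [h]; simp⟩
  by_contra hne
  exact (exp_mul_sub_add_one_lt_exp hne).ne h

end

section

variable {ι : Type*} [Fintype ι] [DecidableEq ι] {μ : ι → ℝ} {i₀ : ι} {c : ℝ}

lemma sum_exp_sub_one_eq_add_sum_erase (h0 : μ i₀ = 0) :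
    ∑ i, exp (μ i - 1) = exp (-1) + ∑ i ∈ univ.erase i₀, exp (μ i - 1) := by
  rw [← add_sum_erase _ _ (mem_univ i₀), h0, zero_sub]

lemma cast_card_univ_erase (i₀ : ι) : (#(univ.erase i₀) : ℝ) = Fintype.card ι - 1 := by
  rw [card_erase_of_mem (mem_univ i₀), card_univ, Nat.cast_pred (Fintype.card_pos_iff.mpr ⟨i₀⟩)]

lemma sum_erase_eq_card_mul (h0 : μ i₀ = 0) (hsum : ∑ i, μ i = (Fintype.card ι - 1) * c) :
    ∑ i ∈ univ.erase i₀, μ i = #(univ.erase i₀) * c := by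
  rw [sum_erase _ h0, hsum, cast_card_univ_erase]

lemma sum_erase_sub_one (h0 : μ i₀ = 0) (hsum : ∑ i, μ i = (Fintype.card ι - 1) * c) :
    ∑ i ∈ univ.erase i₀, (μ i - 1) = #(univ.erase i₀) * (c - 1) := by
  rw [sum_sub_distrib, sum_erase_eq_card_mul h0 hsum, sum_const, nsmul_one]
  ring

theorem le_sum_exp_sub_one (h0 : μ i₀ = 0) (hsum : ∑ i, μ i = (Fintype.card ι - 1) * c) :
    (Fintype.card ι - 1) * exp (c - 1) + exp (-1) ≤ ∑ i, exp (μ i - 1) := by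
  rw [sum_exp_sub_one_eq_add_sum_erase h0, ← cast_card_univ_erase i₀, add_comm]
  gcongr
  exact card_mul_exp_le_sum_exp _ (sum_erase_sub_one h0 hsum)

theorem sum_exp_sub_one_eq_iff (h0 : μ i₀ = 0) (hsum : ∑ i, μ i = (Fintype.card ι - 1) * c)
    (hc : 0 ≤ c) :
    ∑ i, exp (μ i - 1) = (Fintype.card ι - 1) * exp (c - 1) + exp (-1) ↔
      ∀ i, μ i * μ i = c * μ i := by
  rw [sum_exp_sub_one_eq_add_sum_erase h0, ← cast_card_univ_erase i₀, add_comm, add_left_inj,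
    sum_exp_eq_card_mul_exp_iff _ (sum_erase_sub_one h0 hsum)]
  simp only [mem_erase, mem_univ, and_true, sub_left_inj]
  constructor
  · intro h i
    obtain rfl | hi := eq_or_ne i i₀
    · simp [h0]
    · simp [h i hi]
  · intro h
    have hle : ∀ i ∈ univ.erase i₀, μ i ≤ c := fun i _ ↦ by
      rcases mul_eq_mul_right_iff.mp (h i) with hi | hi <;> simp [hi, hc]
    have := (sum_eq_sum_iff_of_le hle).mp (by
      rw [sum_erase_eq_card_mul h0 hsum, sum_const, nsmul_eq_mul])
    simpa using this

end

section normLap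

variable {V : Type*} [Fintype V] (G : SimpleGraph V)

lemma normLap_apply (u v : V) :
    normLap G u v = (√(G.degree u))⁻¹ *
      ((if u = v then (G.degree u : ℝ) else 0) - (if G.Adj u v then 1 else 0)) *
      (√(G.degree v))⁻¹ := by
  simp [normLap, diagonal_mul, mul_diagonal, diagonal_apply, SimpleGraph.adjMatrix_apply]

variable {G}

lemma normLap_apply_self {v : V} (hv : 0 < G.degree v) : normLap G v v = 1 := by
  have : (√(G.degree v))⁻¹ * G.degree v * (√(G.degree v))⁻¹ = 1 := by
    field_simp
    exact (sq_sqrt (Nat.cast_nonneg _)).symm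
  simpa [normLap_apply] using this

lemma normLap_apply_of_adj {u v : V} (h : G.Adj u v) :
    normLap G u v = -(√(G.degree u) * √(G.degree v))⁻¹ := by
  rw [normLap_apply, if_neg h.ne, if_pos h, mul_inv]
  ring

lemma normLap_apply_of_ne_of_not_adj {u v : V} (h : ¬G.Adj u v) (huv : u ≠ v) :
    normLap G u v = 0 := by
  simp [normLap_apply, huv, h]

lemma normLap_apply_neg_of_adj {u v : V} (h : G.Adj u v) : normLap G u v < 0 := by
  have hu : (0 : ℝ) < G.degree u := by exact_mod_cast h.degree_pos_left
  have hv : (0 : ℝ) < G.degree v := by exact_mod_cast h.degree_pos_right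
  rw [normLap_apply_of_adj h, neg_neg_iff_pos]
  positivity

lemma normLap_apply_nonpos_of_ne {u v : V} (huv : u ≠ v) : normLap G u v ≤ 0 := by
  by_cases h : G.Adj u v
  · exact (normLap_apply_neg_of_adj h).le
  · exact (normLap_apply_of_ne_of_not_adj h huv).le

-- Every entry carries the factor `(√0)⁻¹ = 0`.
lemma normLap_of_subsingleton [Subsingleton V] (G : SimpleGraph V) : normLap G = 0 := by
  ext u v
  obtain rfl := Subsingleton.elim u v
  simp [normLap_apply]

lemma trace_normLap (hd : ∀ v, 0 < G.degree v) : (normLap G).trace = Fintype.card V := by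
  simp [trace, normLap_apply_self (hd _)]

lemma normLap_mulVec_sqrt_degree (hd : ∀ v, 0 < G.degree v) :
    normLap G *ᵥ (fun v ↦ √(G.degree v)) = 0 := by
  have hD : diagonal (fun v ↦ (√(G.degree v))⁻¹) *ᵥ (fun v ↦ √(G.degree v)) = fun _ ↦ 1 := by
    ext v
    rw [mulVec_diagonal]
    exact inv_mul_cancel₀ (by positivity [hd v])
  have hLap : (diagonal (fun v ↦ (G.degree v : ℝ)) - G.adjMatrix ℝ) *ᵥ (fun _ ↦ 1) = 0 := by
    ext v
    simp [sub_mulVec, mulVec_diagonal, SimpleGraph.adjMatrix_mulVec_apply]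
  simp only [normLap]
  rw [← mulVec_mulVec, ← mulVec_mulVec, hD, hLap, mulVec_zero]

lemma normLap_mul_self_apply_pos {x y z : V} (hxy : G.Adj x y) (hyz : G.Adj y z)
    (hnxz : ¬G.Adj x z) (hxz : x ≠ z) : 0 < (normLap G * normLap G) x z := by
  have hLxz := normLap_apply_of_ne_of_not_adj hnxz hxz
  rw [mul_apply]
  refine sum_pos' (fun k _ ↦ ?_) ⟨y, mem_univ y,
    mul_pos_of_neg_of_neg (normLap_apply_neg_of_adj hxy) (normLap_apply_neg_of_adj hyz)⟩
  obtain rfl | hxk := eq_or_ne x k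
  · simp [hLxz]
  obtain rfl | hkz := eq_or_ne k z
  · simp [hLxz]
  exact mul_nonneg_of_nonpos_of_nonpos (normLap_apply_nonpos_of_ne hxk)
    (normLap_apply_nonpos_of_ne hkz)

theorem eq_top_of_normLap_mul_self_eq_smul (hG : G.Connected) {c : ℝ}
    (h : normLap G * normLap G = c • normLap G) : G = ⊤ := by
  by_contra hne
  obtain ⟨u, v, huv, hnuv⟩ := SimpleGraph.ne_top_iff_exists_not_adj.mp hne
  obtain ⟨p, hp⟩ := hG.exists_walk_length_eq_dist u v
  obtain ⟨x, y, z, hxy, hyz, hnxz, hxz⟩ :=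
    p.exists_adj_adj_not_adj_ne hp (p.reachable.one_lt_dist_of_ne_of_not_adj huv hnuv)
  have := normLap_mul_self_apply_pos hxy hyz hnxz hxz
  simp [h, normLap_apply_of_ne_of_not_adj hnxz hxz] at this

end normLap

section complete

variable {V : Type*} [Fintype V]

-- The `Fintype` instance is an implicit argument so that rewriting can unify it with the
-- classical one chosen inside `normLap`.
lemma cast_top_degree [Nonempty V] (v : V) {_ : Fintype ((⊤ : SimpleGraph V).neighborSet v)} :
    ((⊤ : SimpleGraph V).degree v : ℝ) = Fintype.card V - 1 := by
  rw [← Nat.cast_pred Fintype.card_pos]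
  congr
  convert SimpleGraph.complete_graph_degree v

lemma isIdempotentElem_of_const_inv_card [Nonempty V] :
    IsIdempotentElem (of fun _ _ : V ↦ (Fintype.card V : ℝ)⁻¹) := by
  ext u v
  simp [mul_apply]

lemma normLap_top [Nontrivial V] :
    normLap (⊤ : SimpleGraph V) = ((Fintype.card V : ℝ) / (Fintype.card V - 1)) •
      (1 - of fun _ _ ↦ (Fintype.card V : ℝ)⁻¹) := by
  have hcard : (0 : ℝ) < Fintype.card V - 1 := by
    have : (1 : ℝ) < Fintype.card V := by exact_mod_cast Fintype.one_lt_card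
    linarith
  ext u v
  obtain rfl | huv := eq_or_ne u v
  · rw [normLap_apply_self (by exact_mod_cast (cast_top_degree u).trans_gt hcard)]
    simp only [Matrix.smul_apply, Matrix.sub_apply, one_apply_eq, of_apply, smul_eq_mul]
    field_simp
  · rw [normLap_apply_of_adj ((SimpleGraph.top_adj u v).mpr huv), cast_top_degree,
      cast_top_degree, mul_self_sqrt hcard.le]
    simp only [Matrix.smul_apply, Matrix.sub_apply, one_apply_ne huv, of_apply, smul_eq_mul,
      zero_sub, mul_neg, neg_inj]
    field_simp

lemma normLap_top_mul_self [Nontrivial V] :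
    normLap (⊤ : SimpleGraph V) * normLap ⊤ =
      ((Fintype.card V : ℝ) / (Fintype.card V - 1)) • normLap ⊤ := by
  rw [normLap_top, smul_mul_smul_comm, isIdempotentElem_of_const_inv_card.one_sub.eq, smul_smul]

end complete

/-- For a connected graph of order N, NEE ≥ (N-1)e^{1/(N-1)} + e^{-1},
with equality iff G is the complete graph. -/
theorem NEE_lower_bound_connected {N : ℕ} (G : SimpleGraph (Fin N))
    (hG : G.Connected) (hL : (normLap G).IsHermitian) :
    NEE G hL ≥ ((N : ℝ) - 1) * Real.exp (1 / ((N : ℝ) - 1)) + Real.exp (-1) ∧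
    (NEE G hL = ((N : ℝ) - 1) * Real.exp (1 / ((N : ℝ) - 1)) + Real.exp (-1) ↔
      G = ⊤) := by
  obtain hN | hN := Nat.lt_or_ge N 2
  · obtain rfl : N = 1 := by have := hG.nonempty.some.pos; omega
    have hzero : hL.eigenvalues = 0 := hL.eigenvalues_eq_zero_iff.mpr (normLap_of_subsingleton G)
    refine ⟨?_, iff_of_true ?_ (Subsingleton.elim _ _)⟩ <;> simp [NEE, hzero]
  have : Nontrivial (Fin N) := Fin.nontrivial_iff_two_le.mpr hN
  have hd : ∀ v, 0 < G.degree v := fun v ↦ hG.preconnected.degree_pos_of_nontrivial v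
  obtain ⟨i₀, hi₀⟩ := hL.exists_eigenvalues_eq_zero
    (Function.ne_iff.mpr ⟨hG.nonempty.some, by positivity [hd hG.nonempty.some]⟩)
    (normLap_mulVec_sqrt_degree hd)
  have hN1 : (0 : ℝ) < N - 1 := by
    have : (2 : ℝ) ≤ N := by exact_mod_cast hN
    linarith
  have hcard : (Fintype.card (Fin N) : ℝ) = N := by simp
  have hsum : ∑ i, hL.eigenvalues i = (Fintype.card (Fin N) - 1) * (N / (N - 1)) := by
    have htr : ∑ i, hL.eigenvalues i = N := by
      simpa [trace_normLap hd] using hL.trace_eq_sum_eigenvalues.symm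
    rw [htr, hcard]
    field_simp
  have hc : (N : ℝ) / (N - 1) - 1 = 1 / (N - 1) := by field_simp; ring
  have hbound := le_sum_exp_sub_one hi₀ hsum
  have hiff := sum_exp_sub_one_eq_iff hi₀ hsum (by positivity)
  rw [hcard, hc] at hbound hiff
  rw [NEE, hiff, ← hL.mul_self_eq_smul_iff]
  exact ⟨hbound, eq_top_of_normLap_mul_self_eq_smul hG, fun h ↦ h ▸ hcard ▸ normLap_top_mul_self⟩
end

section
/- Let G be a graph of order N with c connected components, r of which are isolated vertices. Then NEE(G) ≥ (N-c) e^{(c-r)/(N-c)} + c e^{-1}. -/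
open Matrix BigOperators
open scoped Classical

/-! The normalized Laplacian is `D^{-1/2} L D^{-1/2}` with `L` the combinatorial Laplacian, so its
rank is at most `rank L = N - c`, and at least `c` of its eigenvalues vanish. Its trace is the
number `N - r` of non-isolated vertices, so the remaining `N - c` eigenvalues sum to `N - r`, and
Jensen's inequality for `exp` bounds their contribution to `NEE` by
`(N - c) exp ((N - r) / (N - c) - 1)`. -/

open Finset Real

theorem Finset.card_mul_exp_sum_div_card_le_sum_exp {ι : Type*} (s : Finset ι) (x : ι → ℝ) :
    #s * exp ((∑ i ∈ s, x i) / #s) ≤ ∑ i ∈ s, exp (x i) := by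
  rcases s.eq_empty_or_nonempty with rfl | hs
  · simp
  have hpos : (0 : ℝ) < #s := by exact_mod_cast hs.card_pos
  have jensen := convexOn_exp.map_centerMass_le (t := s) (w := fun _ => 1) (p := x)
    (fun _ _ => zero_le_one) (by simpa using hpos) (fun _ _ => Set.mem_univ _)
  simp only [Finset.centerMass, Finset.sum_const, nsmul_eq_mul, mul_one, one_mul,
    Function.comp_apply, smul_eq_mul] at jensen
  rw [← inv_mul_eq_div]
  calc (#s : ℝ) * exp ((#s : ℝ)⁻¹ * ∑ i ∈ s, x i)
      ≤ #s * ((#s : ℝ)⁻¹ * ∑ i ∈ s, exp (x i)) := by gcongr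
    _ = ∑ i ∈ s, exp (x i) := by field_simp

theorem le_sum_exp_sub_one_of_le_card_eq_zero {ι : Type*} [Fintype ι] (f : ι → ℝ) {c : ℕ}
    (hc : c ≤ Fintype.card {i // f i = 0}) :
    ((Fintype.card ι : ℝ) - c) * exp ((∑ i, f i - (Fintype.card ι - c)) / (Fintype.card ι - c)) +
      c * exp (-1) ≤ ∑ i, exp (f i - 1) := by
  rw [Fintype.card_subtype] at hc
  obtain ⟨S, hSzero, hScard⟩ := Finset.exists_subset_card_eq hc
  have hf : ∀ i ∈ S, f i = 0 := fun i hi => (Finset.mem_filter.mp (hSzero hi)).2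
  have hcard : (#Sᶜ : ℝ) = Fintype.card ι - c := by
    rw [Finset.card_compl, hScard, Nat.cast_sub (hScard ▸ S.card_le_univ)]
  have hsum : ∑ i ∈ Sᶜ, (f i - 1) = ∑ i, f i - #Sᶜ := by
    rw [Finset.sum_sub_distrib, ← Finset.sum_compl_add_sum S, Finset.sum_eq_zero hf]
    simp
  have hzeros : ∑ i ∈ S, exp (f i - 1) = c * exp (-1) := by
    rw [Finset.sum_congr rfl fun i hi => by rw [hf i hi, zero_sub], Finset.sum_const, hScard,
      nsmul_eq_mul]
  rw [← Finset.sum_add_sum_compl S (fun i => exp (f i - 1)), hzeros, add_comm, ← hcard, ← hsum]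
  gcongr
  exact Sᶜ.card_mul_exp_sum_div_card_le_sum_exp _

namespace Matrix.IsHermitian

theorem card_eigenvalues_eq_zero_add_rank {n 𝕜 : Type*} [Fintype n] [DecidableEq n] [RCLike 𝕜]
    {A : Matrix n n 𝕜} (hA : A.IsHermitian) :
    Fintype.card {i // hA.eigenvalues i = 0} + A.rank = Fintype.card n := by
  rw [hA.rank_eq_card_non_zero_eigs, Fintype.card_subtype_compl,
    Nat.add_sub_cancel' (Fintype.card_subtype_le _)]

theorem sum_eigenvalues_eq_trace {n : Type*} [Fintype n] [DecidableEq n] {A : Matrix n n ℝ}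
    (hA : A.IsHermitian) : ∑ i, hA.eigenvalues i = A.trace := by
  simp [hA.trace_eq_sum_eigenvalues]

end Matrix.IsHermitian

namespace SimpleGraph

variable {V : Type*} [Fintype V] [DecidableEq V] (G : SimpleGraph V) [DecidableRel G.Adj]

theorem normLap_eq_mul_lapMatrix_mul :
    normLap G = diagonal (fun v => (√(G.degree v))⁻¹) * G.lapMatrix ℝ *
      diagonal (fun v => (√(G.degree v))⁻¹) := by
  unfold normLap lapMatrix degMatrix
  congr!

theorem rank_lapMatrix_add_card_connectedComponent :
    (G.lapMatrix ℝ).rank + Fintype.card G.ConnectedComponent = Fintype.card V := by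
  rw [card_connectedComponent_eq_finrank_ker_toLin'_lapMatrix, Matrix.rank, toLin'_apply',
    LinearMap.finrank_range_add_finrank_ker, Module.finrank_fintype_fun_eq_card]

theorem rank_normLap_add_card_connectedComponent_le :
    (normLap G).rank + Fintype.card G.ConnectedComponent ≤ Fintype.card V := by
  have hrank : (normLap G).rank ≤ (G.lapMatrix ℝ).rank := by
    rw [normLap_eq_mul_lapMatrix_mul]
    exact (rank_mul_le_left _ _).trans (rank_mul_le_right _ _)
  have := G.rank_lapMatrix_add_card_connectedComponent
  omega

theorem trace_normLap :
    (normLap G).trace = Fintype.card V - Fintype.card {v // G.degree v = 0} := by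
  have hdiag (v : V) : (normLap G).diag v = 1 - if G.degree v = 0 then 1 else 0 := by
    rw [diag_apply, normLap_eq_mul_lapMatrix_mul, mul_diagonal, diagonal_mul]
    have hlap : G.lapMatrix ℝ v v = G.degree v := by simp [lapMatrix, degMatrix]
    split_ifs with h
    · simp [hlap, h]
    · have hd : (0 : ℝ) < G.degree v := by positivity
      rw [hlap, sub_zero, mul_right_comm, ← mul_inv, mul_self_sqrt hd.le,
        inv_mul_cancel₀ hd.ne']
  rw [trace, Finset.sum_congr rfl fun v _ => hdiag v, Finset.sum_sub_distrib, Finset.sum_boole]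
  simp [Fintype.card_subtype]

end SimpleGraph

theorem NEE_lower_bound_general_general {N c r : ℕ} (G : SimpleGraph (Fin N))
    [DecidableRel G.Adj]
    (hc : Nat.card G.ConnectedComponent = c)
    (hr : Nat.card {v : Fin N // G.degree v = 0} = r)
    (hL : (normLap G).IsHermitian) :
    NEE G hL ≥ ((N : ℝ) - c) * Real.exp (((c : ℝ) - r) / ((N : ℝ) - c)) +
      (c : ℝ) * Real.exp (-1) := by
  have hzero : c ≤ Fintype.card {i // hL.eigenvalues i = 0} := by
    have hcount := hL.card_eigenvalues_eq_zero_add_rank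
    have hrank := G.rank_normLap_add_card_connectedComponent_le
    rw [← Nat.card_eq_fintype_card, hc, Fintype.card_fin] at hrank
    rw [Fintype.card_fin] at hcount
    omega
  have hsum : ∑ i, hL.eigenvalues i = N - r := by
    rw [hL.sum_eigenvalues_eq_trace, G.trace_normLap, Fintype.card_fin,
      ← Nat.card_eq_fintype_card, hr]
  have hbound := le_sum_exp_sub_one_of_le_card_eq_zero hL.eigenvalues hzero
  rw [hsum, Fintype.card_fin, sub_sub_sub_cancel_left] at hbound
  exact hbound

/-- If G has order N, c connected components, r of which are isolated vertices,
then NEE ≥ (N-c)e^{(c-r)/(N-c)} + c e^{-1}. -/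
theorem NEE_lower_bound_general {N c r : ℕ} (G : SimpleGraph (Fin N))
    [DecidableRel G.Adj]
    (hc : Nat.card G.ConnectedComponent = c)
    (hr : Nat.card {v : Fin N // G.degree v = 0} = r)
    (hcN : c < N) (hL : (normLap G).IsHermitian) :
    NEE G hL ≥ ((N : ℝ) - c) * Real.exp (((c : ℝ) - r) / ((N : ℝ) - c)) +
      (c : ℝ) * Real.exp (-1) :=
  NEE_lower_bound_general_general G hc hr hL
end

section
/- If λ is an eigenvalue of the normalized Laplacian of G_{n+1}(m) with λ ∉ {0, 1, 2}, then μ = (m+2)·λ·(2-λ), equivalently λ = 1 ± sqrt(1 - μ/(m+2)), is an eigenvalue of the normalized Laplacian of G_n(m) with μ ∉ {0, 2}. -/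
open Matrix BigOperators
open scoped Classical

/-- One iteration of the fractal construction: every edge of the graph is
subdivided by a new middle vertex, and the middle vertex additionally receives
m pendant neighbors.  For an edge e, the new vertices are the pairs (e, j),
j : Fin (m+1); (e, 0) is the middle vertex and (e, j), j ≠ 0, the pendants. -/
noncomputable def fractalStep (m : ℕ) (P : (V : Type) × SimpleGraph V) :
    (V : Type) × SimpleGraph V :=
  ⟨P.1 ⊕ (P.2.edgeSet × Fin (m + 1)),
    SimpleGraph.fromRel (fun x y =>
      match x, y with
      | Sum.inl u, Sum.inr (e, j) => j = 0 ∧ u ∈ (e : Sym2 P.1)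
      | Sum.inr (e, j), Sum.inr (f, k) => e = f ∧ j = 0 ∧ k ≠ 0
      | _, _ => False)⟩

/-- The treelike fractal G_n(m): G_0(m) is a single edge, and each generation
is obtained from the previous one by one fractal iteration step. -/
noncomputable def fractal (m : ℕ) (n : ℕ) : (V : Type) × SimpleGraph V :=
  Nat.rec ⟨Fin 2, ⊤⟩ (fun _ ih => fractalStep m ih) n

instance fractal_finite (m n : ℕ) : Finite (fractal m n).1 := by
  induction n with
  | zero => exact inferInstanceAs (Finite (Fin 2))
  | succ n ih =>
      exact inferInstanceAs
        (Finite ((fractal m n).1 ⊕ ((fractal m n).2.edgeSet × Fin (m + 1))))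

noncomputable instance fractal_fintype (m n : ℕ) : Fintype (fractal m n).1 :=
  Fintype.ofFinite _

/-!
Writing an eigenvector of the normalized Laplacian as `x = D^{1/2} f` turns `L x = λ x` into
`A f = (1 - λ) D f`. On `G_{n+1}` this equation determines `f` at each pendant vertex from the
adjacent middle vertex, and then gives `t (f a + f b) = ((m + 2) t² - m) f(mid ab)` for every
edge `ab` of `G_n`, where `t = 1 - λ`. Summing over the edges at a vertex shows that `f`
restricted to `G_n` solves the same equation with `1 - μ = (m + 2) t² - m - 1`, i.e.
`μ = (m + 2) λ (2 - λ)`, and the restriction is nonzero as soon as `μ ≠ 2`. If `μ = 2`, then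
`f` alternates in sign along the edges of `G_n`, which forces it to vanish on `G_n`; the middle
values then form a symmetric edge weighting with zero sum at every vertex, and on the trees
`G_n` such weightings vanish (proved along the construction, together with the same statement
for circulations), so `f = 0`.
-/

open Finset Sum

theorem Matrix.mem_spectrum_iff_exists_mulVec_eq_smul {n K : Type*} [Fintype n] [DecidableEq n]
    [Field K] {A : Matrix n n K} {r : K} :
    r ∈ spectrum K A ↔ ∃ v ≠ 0, A *ᵥ v = r • v := by
  rw [← Matrix.spectrum_toLin', ← Module.End.hasEigenvalue_iff_mem_spectrum,
    Module.End.hasEigenvalue_iff, Submodule.ne_bot_iff]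
  simp only [Module.End.mem_eigenspace_iff, Matrix.toLin'_apply]
  exact exists_congr fun v => ⟨fun h => ⟨h.2, h.1⟩, fun h => ⟨h.2, h.1⟩⟩

namespace SimpleGraph

variable {V M : Type*} {G : SimpleGraph V}

theorem adj_other {e : G.edgeSet} {a : V} (ha : a ∈ (e : Sym2 V)) :
    G.Adj a (Sym2.Mem.other ha) := by
  rw [← mem_edgeSet, Sym2.other_spec]
  exact e.2

variable [Fintype V] (G)

theorem sum_sum_neighborFinset_swap [AddCommMonoid M] (Φ : V → V → M) :
    ∑ u, ∑ v ∈ G.neighborFinset u, Φ u v = ∑ u, ∑ v ∈ G.neighborFinset u, Φ v u := by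
  simp only [neighborFinset_eq_filter, sum_filter]
  rw [sum_comm]
  simp only [adj_comm]

theorem sum_edgeSet_ite_mem [AddCommMonoid M] (u : V) (φ : Sym2 V → M) :
    ∑ e : G.edgeSet, (if u ∈ (e : Sym2 V) then φ e else 0) =
      ∑ v ∈ G.neighborFinset u, φ s(u, v) := by
  rw [← sum_filter]
  refine sum_bij' (fun e he => Sym2.Mem.other (mem_filter.1 he).2)
    (fun v hv => ⟨s(u, v), (G.mem_neighborFinset u v).1 hv⟩) (fun e he => ?_) (fun v hv => ?_)
    (fun e he => ?_) (fun v hv => ?_) (fun e he => ?_)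
  · exact (G.mem_neighborFinset _ _).2 (adj_other _)
  · simp
  · exact Subtype.ext (Sym2.other_spec _)
  · exact Sym2.congr_right.1 (Sym2.other_spec _)
  · rw [Sym2.other_spec]

/-- `f` is an eigenvector of the random walk matrix `D⁻¹A` with eigenvalue `t`. -/
def IsRandomWalkEigenvector (t : ℝ) (f : V → ℝ) : Prop :=
  ∀ v, ∑ w ∈ G.neighborFinset v, f w = t * G.degree v * f v

/-- For `ε = -1` this says that `G` carries no nonzero circulation, i.e. that `G` is a forest. -/
def BalancedWeightsVanish (ε : ℝ) : Prop :=
  ∀ F : V → V → ℝ, (∀ u v, G.Adj u v → F v u = ε * F u v) →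
    (∀ u, ∑ v ∈ G.neighborFinset u, F u v = 0) → ∀ u v, G.Adj u v → F u v = 0

variable {G}

theorem BalancedWeightsVanish.of_degree_eq_one (h : ∀ v, G.degree v = 1) (ε : ℝ) :
    G.BalancedWeightsVanish ε := by
  intro F _ hsum u v huv
  have hN : G.neighborFinset u = {v} := by
    obtain ⟨w, hw⟩ := card_eq_one.1 ((G.card_neighborFinset_eq_degree u).trans (h u))
    have hvw : v = w := mem_singleton.1 (hw ▸ (G.mem_neighborFinset u v).2 huv)
    rw [hw, hvw]
  simpa [hN] using hsum u

theorem normLap_mulVec_sqrt_degree_mul (hd : ∀ v, 0 < G.degree v) (f : V → ℝ) :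
    normLap G *ᵥ (fun v => √(G.degree v) * f v) =
      fun v => (√(G.degree v))⁻¹ * (G.degree v * f v - ∑ w ∈ G.neighborFinset v, f w) := by
  have hsqrt : ∀ v, √(G.degree v : ℝ) ≠ 0 := fun v => by
    have := hd v
    positivity
  have hf : (diagonal fun v => (√(G.degree v : ℝ))⁻¹) *ᵥ (fun v => √(G.degree v) * f v) =
      f := by
    ext v
    simp [mulVec_diagonal, hsqrt]
  ext v
  rw [normLap, ← mulVec_mulVec, ← mulVec_mulVec]
  simp [hf, mulVec_diagonal, sub_mulVec]

theorem mem_spectrum_normLap_iff [DecidableEq V] (hd : ∀ v, 0 < G.degree v) (r : ℝ) :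
    r ∈ spectrum ℝ (normLap G) ↔ ∃ f ≠ 0, G.IsRandomWalkEigenvector (1 - r) f := by
  have hsqrt : ∀ v, √(G.degree v : ℝ) ≠ 0 := fun v => by
    have := hd v
    positivity
  have key : ∀ f : V → ℝ, normLap G *ᵥ (fun v => √(G.degree v) * f v) =
      r • (fun v => √(G.degree v) * f v) ↔ G.IsRandomWalkEigenvector (1 - r) f := by
    intro f
    rw [normLap_mulVec_sqrt_degree_mul hd, funext_iff]
    refine forall_congr' fun v => ?_
    have hdd : √(G.degree v : ℝ) * √(G.degree v) = G.degree v :=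
      Real.mul_self_sqrt (by positivity)
    simp only [Pi.smul_apply, smul_eq_mul]
    rw [inv_mul_eq_iff_eq_mul₀ (hsqrt v)]
    constructor <;> intro h <;> linear_combination -h - r * f v * hdd
  rw [Matrix.mem_spectrum_iff_exists_mulVec_eq_smul]
  constructor
  · rintro ⟨x, hx, hxr⟩
    have hx' : x = fun v => √(G.degree v) * (x v / √(G.degree v)) := by
      ext v
      field_simp [hsqrt v]
    rw [hx'] at hxr
    refine ⟨fun v => x v / √(G.degree v), fun h => hx ?_, (key _).1 hxr⟩
    ext v
    simpa [hsqrt v] using congrFun h v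
  · rintro ⟨f, hf, hfr⟩
    refine ⟨_, fun h => hf ?_, (key f).2 hfr⟩
    ext v
    simpa [hsqrt v] using congrFun h v

end SimpleGraph

/-- The graph of `fractalStep m ⟨V, G⟩`, on a vertex type that is syntactically a sum, so that
`inl u` and `inr (e, j)` are vertices without unfolding `fractalStep`. -/
def stepGraph {V : Type*} (m : ℕ) (G : SimpleGraph V) :
    SimpleGraph (V ⊕ (G.edgeSet × Fin (m + 1))) :=
  SimpleGraph.fromRel fun x y =>
    match x, y with
    | Sum.inl u, Sum.inr (e, j) => j = 0 ∧ u ∈ (e : Sym2 V)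
    | Sum.inr (e, j), Sum.inr (f, k) => e = f ∧ j = 0 ∧ k ≠ 0
    | _, _ => False

namespace stepGraph

variable {V M : Type*} {m : ℕ} {G : SimpleGraph V}

@[simp] theorem not_adj_inl_inl {u v : V} : ¬ (stepGraph m G).Adj (inl u) (inl v) := by
  simp [stepGraph]

@[simp] theorem adj_inl_inr {u : V} {e : G.edgeSet} {j : Fin (m + 1)} :
    (stepGraph m G).Adj (inl u) (inr (e, j)) ↔ j = 0 ∧ u ∈ (e : Sym2 V) := by
  simp [stepGraph]

@[simp] theorem adj_inr_inl {u : V} {e : G.edgeSet} {j : Fin (m + 1)} :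
    (stepGraph m G).Adj (inr (e, j)) (inl u) ↔ j = 0 ∧ u ∈ (e : Sym2 V) := by
  rw [SimpleGraph.adj_comm, adj_inl_inr]

@[simp] theorem adj_inr_inr {e f : G.edgeSet} {j k : Fin (m + 1)} :
    (stepGraph m G).Adj (inr (e, j)) (inr (f, k)) ↔
      e = f ∧ (j = 0 ∧ k ≠ 0 ∨ k = 0 ∧ j ≠ 0) := by
  simp only [stepGraph, SimpleGraph.fromRel_adj, ne_eq, Sum.inr.injEq, Prod.ext_iff]
  grind

noncomputable def midValue [Zero M] (g : V ⊕ (G.edgeSet × Fin (m + 1)) → M) (e : Sym2 V) : M :=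
  if h : e ∈ G.edgeSet then g (inr (⟨e, h⟩, 0)) else 0

section midValue

variable [Zero M] (g : V ⊕ (G.edgeSet × Fin (m + 1)) → M)

@[simp] theorem midValue_coe (e : G.edgeSet) : midValue g e = g (inr (e, 0)) := by
  simp [midValue, e.2]

theorem midValue_of_mem {e : G.edgeSet} {a : V} (ha : a ∈ (e : Sym2 V)) :
    midValue g s(a, Sym2.Mem.other ha) = g (inr (e, 0)) := by
  rw [Sym2.other_spec, midValue_coe]

theorem midValue_swap (a b : V) : midValue g s(a, b) = midValue g s(b, a) := by
  rw [Sym2.eq_swap]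

theorem apply_mid_eq_zero (h : ∀ a b, G.Adj a b → midValue g s(a, b) = 0) (e : G.edgeSet) :
    g (inr (e, 0)) = 0 := by
  obtain ⟨e, he⟩ := e
  induction e using Sym2.ind with
  | h a b => exact (midValue_coe g ⟨s(a, b), he⟩).symm.trans (h a b he)

end midValue

variable [Fintype V]

section sums

variable [AddCommMonoid M] (g : V ⊕ (G.edgeSet × Fin (m + 1)) → M)

theorem sum_neighborFinset_inl (u : V) :
    ∑ w ∈ (stepGraph m G).neighborFinset (inl u), g w =
      ∑ v ∈ G.neighborFinset u, midValue g s(u, v) := by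
  rw [SimpleGraph.neighborFinset_eq_filter, sum_filter, Fintype.sum_sum_type,
    Fintype.sum_prod_type]
  simp [Fin.sum_univ_succ, ← G.sum_edgeSet_ite_mem]

theorem sum_neighborFinset_mid {a b : V} (h : s(a, b) ∈ G.edgeSet) :
    ∑ w ∈ (stepGraph m G).neighborFinset (inr (⟨s(a, b), h⟩, 0)), g w =
      g (inl a) + g (inl b) + ∑ j : Fin m, g (inr (⟨s(a, b), h⟩, j.succ)) := by
  rw [SimpleGraph.neighborFinset_eq_filter, sum_filter, Fintype.sum_sum_type,
    Fintype.sum_prod_type]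
  simp [Fin.sum_univ_succ]
  rw [← sum_filter, show univ.filter (fun x => x = a ∨ x = b) = {a, b} by ext; simp,
    sum_pair (G.ne_of_adj h)]

theorem sum_neighborFinset_pendant (e : G.edgeSet) (j : Fin m) :
    ∑ w ∈ (stepGraph m G).neighborFinset (inr (e, j.succ)), g w = g (inr (e, 0)) := by
  rw [SimpleGraph.neighborFinset_eq_filter, sum_filter, Fintype.sum_sum_type,
    Fintype.sum_prod_type]
  simp [Fin.sum_univ_succ]

end sums

theorem degree_inl (u : V) : (stepGraph m G).degree (inl u) = G.degree u := by
  simp only [← SimpleGraph.card_neighborFinset_eq_degree, card_eq_sum_ones,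
    sum_neighborFinset_inl]
  refine sum_congr rfl fun v hv => ?_
  rw [midValue, dif_pos (G.mem_edgeSet.2 ((G.mem_neighborFinset u v).1 hv))]

theorem degree_mid {a b : V} (h : s(a, b) ∈ G.edgeSet) :
    (stepGraph m G).degree (inr (⟨s(a, b), h⟩, 0)) = m + 2 := by
  simp only [← SimpleGraph.card_neighborFinset_eq_degree, card_eq_sum_ones,
    sum_neighborFinset_mid]
  simp
  ring

theorem degree_pendant (e : G.edgeSet) (j : Fin m) :
    (stepGraph m G).degree (inr (e, j.succ)) = 1 := by
  simp only [← SimpleGraph.card_neighborFinset_eq_degree, card_eq_sum_ones,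
    sum_neighborFinset_pendant]

theorem degree_pos (hd : ∀ v, 0 < G.degree v) (w : V ⊕ (G.edgeSet × Fin (m + 1))) :
    0 < (stepGraph m G).degree w := by
  rcases w with u | ⟨⟨e, he⟩, j⟩
  · rw [degree_inl]
    exact hd u
  · induction e using Sym2.ind with
    | h a b =>
      rcases Fin.eq_zero_or_eq_succ j with rfl | ⟨j, rfl⟩
      · rw [degree_mid]
        omega
      · rw [degree_pendant]
        exact one_pos

theorem balancedWeightsVanish (hG : G.BalancedWeightsVanish (-1)) (ε : ℝ) :
    (stepGraph m G).BalancedWeightsVanish ε := by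
  intro F hsym hsum
  have hpendant_in : ∀ e (j : Fin m), F (inr (e, j.succ)) (inr (e, 0)) = 0 := fun e j => by
    simpa [sum_neighborFinset_pendant] using hsum (inr (e, j.succ))
  have hpendant_out : ∀ e (j : Fin m), F (inr (e, 0)) (inr (e, j.succ)) = 0 := fun e j => by
    rw [hsym _ _ (by simp), hpendant_in, mul_zero]
  have hmid : ∀ a b (h : s(a, b) ∈ G.edgeSet),
      F (inr (⟨s(a, b), h⟩, 0)) (inl a) + F (inr (⟨s(a, b), h⟩, 0)) (inl b) = 0 :=
    fun a b h => by
      simpa [sum_neighborFinset_mid, hpendant_out] using hsum (inr (⟨s(a, b), h⟩, 0))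
  -- the weights of the darts into the middle vertices form a circulation on `G`
  have hbase : ∀ a b, G.Adj a b → midValue (F (inl a)) s(a, b) = 0 := by
    refine hG _ (fun a b hab => ?_) (fun a => ?_)
    · rw [midValue_swap]
      have hab' : s(a, b) ∈ G.edgeSet := hab
      simp only [midValue, dif_pos hab']
      linear_combination hsym (inr (⟨s(a, b), hab'⟩, 0)) (inl b) (by simp) +
        hsym (inr (⟨s(a, b), hab'⟩, 0)) (inl a) (by simp) + ε * hmid a b hab'
    · simpa [sum_neighborFinset_inl] using hsum (inl a)
  have hinl : ∀ a (e : G.edgeSet), a ∈ (e : Sym2 V) → F (inl a) (inr (e, 0)) = 0 :=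
    fun a e ha => by
      rw [← midValue_of_mem (F (inl a)) ha]
      exact hbase _ _ (SimpleGraph.adj_other ha)
  rintro (a | ⟨e, j⟩) (b | ⟨f, k⟩) huv
  · simp at huv
  · obtain ⟨rfl, hb⟩ := adj_inl_inr.1 huv
    exact hinl a f hb
  · obtain ⟨rfl, hb⟩ := adj_inr_inl.1 huv
    rw [hsym _ _ huv.symm, hinl b e hb, mul_zero]
  · obtain ⟨rfl, ⟨rfl, hk⟩ | ⟨rfl, hj⟩⟩ := adj_inr_inr.1 huv
    · obtain ⟨k, rfl⟩ := Fin.exists_succ_eq.2 hk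
      exact hpendant_out e k
    · obtain ⟨j, rfl⟩ := Fin.exists_succ_eq.2 hj
      exact hpendant_in e j

section eigenvector

variable {t : ℝ} {f : V ⊕ (G.edgeSet × Fin (m + 1)) → ℝ}

theorem mid_eq_mul_pendant (hf : (stepGraph m G).IsRandomWalkEigenvector t f) (e : G.edgeSet)
    (j : Fin m) : f (inr (e, 0)) = t * f (inr (e, j.succ)) := by
  simpa [sum_neighborFinset_pendant, degree_pendant] using hf (inr (e, j.succ))

theorem mul_add_eq_mid (hf : (stepGraph m G).IsRandomWalkEigenvector t f) {a b : V}
    (h : s(a, b) ∈ G.edgeSet) :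
    t * (f (inl a) + f (inl b)) = ((m + 2) * t ^ 2 - m) * f (inr (⟨s(a, b), h⟩, 0)) := by
  have hmid := hf (inr (⟨s(a, b), h⟩, 0))
  rw [sum_neighborFinset_mid, degree_mid] at hmid
  have hpendants : t * ∑ j : Fin m, f (inr (⟨s(a, b), h⟩, j.succ)) =
      m * f (inr (⟨s(a, b), h⟩, 0)) := by
    simp [mul_sum, ← mid_eq_mul_pendant hf]
  push_cast at hmid
  linear_combination t * hmid - hpendants

theorem sum_midValue_eq (hf : (stepGraph m G).IsRandomWalkEigenvector t f) (u : V) :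
    ∑ v ∈ G.neighborFinset u, midValue f s(u, v) = t * G.degree u * f (inl u) := by
  rw [← sum_neighborFinset_inl, hf, degree_inl]

theorem isRandomWalkEigenvector_comp_inl (hf : (stepGraph m G).IsRandomWalkEigenvector t f)
    (ht : t ≠ 0) : G.IsRandomWalkEigenvector ((m + 2) * t ^ 2 - m - 1) (f ∘ inl) := by
  intro u
  have hedge : ∀ v ∈ G.neighborFinset u,
      t * f (inl v) = ((m + 2) * t ^ 2 - m) * midValue f s(u, v) - t * f (inl u) := by
    intro v hv
    have huv : s(u, v) ∈ G.edgeSet := (G.mem_neighborFinset u v).1 hv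
    rw [midValue, dif_pos huv, ← mul_add_eq_mid hf huv]
    ring
  refine mul_left_cancel₀ ht ?_
  simp only [Function.comp_apply]
  rw [mul_sum, sum_congr rfl hedge, sum_sub_distrib, ← mul_sum, sum_midValue_eq hf, sum_const,
    G.card_neighborFinset_eq_degree, nsmul_eq_mul]
  ring

theorem eq_zero_of_apply_inl_of_apply_mid (hf : (stepGraph m G).IsRandomWalkEigenvector t f)
    (ht : t ≠ 0) (hinl : ∀ u, f (inl u) = 0) (hmid : ∀ e, f (inr (e, 0)) = 0) : f = 0 := by
  ext (u | ⟨e, j⟩)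
  · exact hinl u
  · rcases Fin.eq_zero_or_eq_succ j with rfl | ⟨j, rfl⟩
    · exact hmid e
    · have := mid_eq_mul_pendant hf e j
      rw [hmid e] at this
      simpa [ht] using this.symm

theorem apply_inl_eq_zero_of_add_two_mul_sq_eq
    (hf : (stepGraph m G).IsRandomWalkEigenvector t f) (hd : ∀ v, 0 < G.degree v) (ht : t ≠ 0)
    (hK : (m + 2) * t ^ 2 = m) (u : V) :
    f (inl u) = 0 := by
  -- `f ∘ inl` is then alternating along edges, so the double sum below is its own negative
  have halt : ∀ a, ∀ b ∈ G.neighborFinset a, f (inl b) = -f (inl a) := by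
    intro a b hb
    have := mul_add_eq_mid hf ((G.mem_neighborFinset a b).1 hb)
    rw [hK, sub_self, zero_mul] at this
    linear_combination (mul_eq_zero.1 this).resolve_left ht
  have hS : ∑ a, ∑ b ∈ G.neighborFinset a, f (inl a) * midValue f s(a, b) =
      t * ∑ a, G.degree a * f (inl a) ^ 2 := by
    rw [mul_sum]
    refine sum_congr rfl fun a _ => ?_
    rw [← mul_sum, sum_midValue_eq hf]
    ring
  have hswap : ∑ a, ∑ b ∈ G.neighborFinset a, f (inl a) * midValue f s(a, b) =
      -∑ a, ∑ b ∈ G.neighborFinset a, f (inl a) * midValue f s(a, b) := by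
    conv_lhs => rw [G.sum_sum_neighborFinset_swap]
    simp only [← sum_neg_distrib]
    refine sum_congr rfl fun a _ => sum_congr rfl fun b hb => ?_
    rw [halt a b hb, midValue_swap]
    ring
  have hS0 : t * ∑ a, G.degree a * f (inl a) ^ 2 = 0 := by linarith
  rw [mul_eq_zero, or_iff_right ht, sum_eq_zero_iff_of_nonneg fun a _ => by positivity] at hS0
  simpa [(hd u).ne'] using hS0 u (mem_univ u)

theorem add_two_mul_sq_ne (hG : G.BalancedWeightsVanish 1) (hd : ∀ v, 0 < G.degree v)
    (ht : t ≠ 0) (hf0 : f ≠ 0) (hf : (stepGraph m G).IsRandomWalkEigenvector t f) :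
    (m + 2) * t ^ 2 ≠ m := by
  intro hK
  have hinl := apply_inl_eq_zero_of_add_two_mul_sq_eq hf hd ht hK
  refine hf0 (eq_zero_of_apply_inl_of_apply_mid hf ht hinl (apply_mid_eq_zero f ?_))
  refine hG (fun a b => midValue f s(a, b)) (fun a b _ => by rw [one_mul, midValue_swap])
    fun a => ?_
  rw [sum_midValue_eq hf, hinl, mul_zero]

theorem comp_inl_ne_zero (hK : (m + 2) * t ^ 2 ≠ m) (ht : t ≠ 0) (hf0 : f ≠ 0)
    (hf : (stepGraph m G).IsRandomWalkEigenvector t f) : f ∘ inl ≠ 0 := by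
  intro hinl
  have hinl' : ∀ u, f (inl u) = 0 := fun u => congrFun hinl u
  refine hf0 (eq_zero_of_apply_inl_of_apply_mid hf ht hinl' (apply_mid_eq_zero f ?_))
  intro a b hab
  have := mul_add_eq_mid hf (G.mem_edgeSet.2 hab)
  rw [hinl', hinl', add_zero, mul_zero, eq_comm, mul_eq_zero,
    or_iff_right (sub_ne_zero.2 hK)] at this
  rw [midValue, dif_pos (G.mem_edgeSet.2 hab), this]

end eigenvector

end stepGraph

theorem fractal_succ_snd_eq_stepGraph (m n : ℕ) :
    (fractal m (n + 1)).2 = stepGraph m (fractal m n).2 := by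
  ext x y
  rcases x with u | ⟨e, j⟩ <;> rcases y with v | ⟨f, k⟩ <;> rfl

theorem fractal_succ_iff (m n : ℕ) (Q : ∀ (W : Type) [Fintype W], SimpleGraph W → Prop) :
    Q (fractal m (n + 1)).1 (fractal m (n + 1)).2 ↔ Q _ (stepGraph m (fractal m n).2) := by
  change @Q ((fractal m n).1 ⊕ ((fractal m n).2.edgeSet × Fin (m + 1)))
    (fractal_fintype m (n + 1)) (fractal m (n + 1)).2 ↔ _
  rw [fractal_succ_snd_eq_stepGraph, Subsingleton.elim (fractal_fintype m (n + 1))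
    (inferInstance : Fintype ((fractal m n).1 ⊕ ((fractal m n).2.edgeSet × Fin (m + 1))))]

theorem fractal_zero_degree (m : ℕ) (v : (fractal m 0).1) : (fractal m 0).2.degree v = 1 := by
  rw [← SimpleGraph.card_neighborSet_eq_degree, Fintype.card_eq_nat_card]
  revert v
  change ∀ v : Fin 2, Nat.card ((⊤ : SimpleGraph (Fin 2)).neighborSet v) = 1
  intro v
  rw [SimpleGraph.neighborSet_top, Nat.card_coe_set_eq, Set.ncard_compl]
  simp

theorem fractal_degree_pos (m n : ℕ) (v : (fractal m n).1) : 0 < (fractal m n).2.degree v := by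
  induction n with
  | zero => rw [fractal_zero_degree]; exact one_pos
  | succ n ih =>
    exact (fractal_succ_iff m n fun _ _ G => ∀ v, 0 < G.degree v).2 (stepGraph.degree_pos ih) v

theorem fractal_balancedWeightsVanish (m n : ℕ) (ε : ℝ) :
    (fractal m n).2.BalancedWeightsVanish ε := by
  induction n generalizing ε with
  | zero => exact .of_degree_eq_one (fractal_zero_degree m) ε
  | succ n ih =>
    exact (fractal_succ_iff m n fun _ _ G => G.BalancedWeightsVanish ε).2
      (stepGraph.balancedWeightsVanish (ih (-1)) ε)

theorem eq_one_add_sqrt_or_eq_one_sub_sqrt {c : ℝ} (hc : c ≠ 0) (x : ℝ) :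
    x = 1 + √(1 - c * x * (2 - x) / c) ∨ x = 1 - √(1 - c * x * (2 - x) / c) := by
  have hsq : 1 - c * x * (2 - x) / c = (1 - x) ^ 2 := by
    field_simp
    ring
  rw [hsq, Real.sqrt_sq_eq_abs]
  rcases le_total x 1 with hx | hx
  · right
    rw [abs_of_nonneg (by linarith)]
    ring
  · left
    rw [abs_of_nonpos (by linarith)]
    ring

theorem fractal_eigenvalue_recursion_general (m n : ℕ) (lam : ℝ)
    (hmem : lam ∈ spectrum ℝ (normLap (fractal m (n + 1)).2))
    (h0 : lam ≠ 0) (h1 : lam ≠ 1) (h2 : lam ≠ 2) :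
    ((m : ℝ) + 2) * lam * (2 - lam) ∈ spectrum ℝ (normLap (fractal m n).2) ∧
    ((m : ℝ) + 2) * lam * (2 - lam) ≠ 0 ∧
    ((m : ℝ) + 2) * lam * (2 - lam) ≠ 2 ∧
    (lam = 1 + Real.sqrt (1 - ((m : ℝ) + 2) * lam * (2 - lam) / ((m : ℝ) + 2)) ∨
     lam = 1 - Real.sqrt (1 - ((m : ℝ) + 2) * lam * (2 - lam) / ((m : ℝ) + 2))) := by
  have hd := fractal_degree_pos m n
  have ht : 1 - lam ≠ 0 := sub_ne_zero.2 h1.symm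
  obtain ⟨f, hf0, hf⟩ := (fractal_succ_iff m n fun _ _ G =>
    ∃ f ≠ 0, G.IsRandomWalkEigenvector (1 - lam) f).1
    ((SimpleGraph.mem_spectrum_normLap_iff (fractal_degree_pos m (n + 1)) lam).1 hmem)
  have hK := stepGraph.add_two_mul_sq_ne (fractal_balancedWeightsVanish m n 1) hd ht hf0 hf
  refine ⟨(SimpleGraph.mem_spectrum_normLap_iff hd _).2
      ⟨_, stepGraph.comp_inl_ne_zero hK ht hf0 hf, fun u => ?_⟩,
    ?_, fun h => hK ?_, eq_one_add_sqrt_or_eq_one_sub_sqrt (by positivity) lam⟩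
  · rw [stepGraph.isRandomWalkEigenvector_comp_inl hf ht u]
    ring
  · have : (m : ℝ) + 2 ≠ 0 := by positivity
    simp [this, h0, sub_ne_zero.2 h2.symm]
  · linear_combination -h

/-- If λ ∉ {0,1,2} is a normalized Laplacian eigenvalue of G_{n+1}(m), then
μ = (m+2)λ(2-λ) is a normalized Laplacian eigenvalue of G_n(m) with μ ∉ {0,2},
and λ = 1 ± sqrt(1 - μ/(m+2)). -/
theorem fractal_eigenvalue_recursion (m n : ℕ) (hm : 1 ≤ m) (lam : ℝ)
    (hmem : lam ∈ spectrum ℝ (normLap (fractal m (n + 1)).2))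
    (h0 : lam ≠ 0) (h1 : lam ≠ 1) (h2 : lam ≠ 2) :
    ((m : ℝ) + 2) * lam * (2 - lam) ∈ spectrum ℝ (normLap (fractal m n).2) ∧
    ((m : ℝ) + 2) * lam * (2 - lam) ≠ 0 ∧
    ((m : ℝ) + 2) * lam * (2 - lam) ≠ 2 ∧
    (lam = 1 + Real.sqrt (1 - ((m : ℝ) + 2) * lam * (2 - lam) / ((m : ℝ) + 2)) ∨
     lam = 1 - Real.sqrt (1 - ((m : ℝ) + 2) * lam * (2 - lam) / ((m : ℝ) + 2))) :=
  fractal_eigenvalue_recursion_general m n lam hmem h0 h1 h2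
end
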